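/- Strict lower bound on the Betti-0 interleaving distance for the sine/absolute-sine 3-point dynamic point clouds: fix r > 0 and consider the DMSs γ_X with points x₁(t) = −r, x₂(t) = r sin t, x₃(t) = r, and γ_Y with points y₁(t) = −r, y₂(t) = r|sin t|, y₃(t) = r, on the real line with the induced distances. Then for every ε ∈ [0, r), β₀^{γ_X}([π/2, 3π/2], 0) = 1 while β₀^{γ_Y}([π/2 − ε, 3π/2 + ε], ε) = 2; hence d_I(β₀^{γ_X}, β₀^{γ_Y}) ≥ r. -/
import Mathlib


namespace Stmt16

noncomputable def vee {X : Type} (d : ℝ → X → X → ℝ) (a b : ℝ) (x x' : X) : ℝ :=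
  sInf ((fun s => d s x x') '' Set.Icc a b)

/-- Betti-0 function: number of classes of the relation generated by
`⋁_{[a,b]} d(x,x') ≤ δ`. -/
noncomputable def betti0 {X : Type} (d : ℝ → X → X → ℝ) (a b : ℝ) (δ : ℝ) : ℕ :=
  Nat.card (Quot (fun x x' : X => vee d a b x x' ≤ δ))

/-- Trajectories of `γ_X`: `x₁(t) = −r`, `x₂(t) = r sin t`, `x₃(t) = r`. -/
noncomputable def trajX (r : ℝ) : Fin 3 → ℝ → ℝ :=
  ![fun _ => -r, fun t => r * Real.sin t, fun _ => r]

/-- Trajectories of `γ_Y`: `y₁(t) = −r`, `y₂(t) = r |sin t|`, `y₃(t) = r`. -/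
noncomputable def trajY (r : ℝ) : Fin 3 → ℝ → ℝ :=
  ![fun _ => -r, fun t => r * |Real.sin t|, fun _ => r]

noncomputable def dX (r : ℝ) (t : ℝ) (i j : Fin 3) : ℝ := |trajX r i t - trajX r j t|
noncomputable def dY (r : ℝ) (t : ℝ) (i j : Fin 3) : ℝ := |trajY r i t - trajY r j t|

lemma vee_le_of_mem {X : Type} (d : ℝ → X → X → ℝ) (a b : ℝ) (x x' : X) (s : ℝ)
    (hs : s ∈ Set.Icc a b) (hbd : ∀ u y y', 0 ≤ d u y y') :
    vee d a b x x' ≤ d s x x' :=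
  csInf_le ⟨0, by rintro y ⟨u, hu, rfl⟩; exact hbd u _ _⟩ ⟨s, hs, rfl⟩

lemma le_vee {X : Type} (d : ℝ → X → X → ℝ) (a b : ℝ) (hab : a ≤ b) (x x' : X) (c : ℝ)
    (h : ∀ s ∈ Set.Icc a b, c ≤ d s x x') : c ≤ vee d a b x x' := by
  apply le_csInf
  · exact ⟨d a x x', ⟨a, ⟨le_refl a, hab⟩, rfl⟩⟩
  · rintro y ⟨s, hs, rfl⟩; exact h s hs

lemma dX_nonneg (r : ℝ) : ∀ u y y', 0 ≤ dX r u y y' := fun _ _ _ => abs_nonneg _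
lemma dY_nonneg (r : ℝ) : ∀ u y y', 0 ≤ dY r u y y' := fun _ _ _ => abs_nonneg _

theorem betti0_sine_example (r : ℝ) (hr : 0 < r) :
    (∀ ε : ℝ, 0 ≤ ε → ε < r →
      betti0 (dX r) (Real.pi / 2) (3 * Real.pi / 2) 0 = 1 ∧
      betti0 (dY r) (Real.pi / 2 - ε) (3 * Real.pi / 2 + ε) ε = 2) ∧
    (∀ ε : ℝ, 0 ≤ ε →
      (∀ t₁ t₂ δ : ℝ, t₁ ≤ t₂ → 0 ≤ δ →
        betti0 (dY r) (t₁ - ε) (t₂ + ε) (δ + ε) ≤ betti0 (dX r) t₁ t₂ δ ∧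
        betti0 (dX r) (t₁ - ε) (t₂ + ε) (δ + ε) ≤ betti0 (dY r) t₁ t₂ δ) →
      r ≤ ε) := by
  have hpi := Real.pi_pos
  have hab : Real.pi / 2 ≤ 3 * Real.pi / 2 := by linarith
  have hsin32 : Real.sin (3 * Real.pi / 2) = -1 := by
    rw [show (3 * Real.pi / 2) = Real.pi / 2 + Real.pi by ring, Real.sin_add_pi,
      Real.sin_pi_div_two]
  have key : ∀ ε : ℝ, 0 ≤ ε → ε < r →
      betti0 (dX r) (Real.pi / 2) (3 * Real.pi / 2) 0 = 1 ∧
      betti0 (dY r) (Real.pi / 2 - ε) (3 * Real.pi / 2 + ε) ε = 2 := by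
    intro ε hε hεr
    constructor
    · -- X part: one class
      set R : Fin 3 → Fin 3 → Prop :=
        fun x x' => vee (dX r) (Real.pi / 2) (3 * Real.pi / 2) x x' ≤ 0 with hR
      have h01 : R 0 1 := by
        have hle := vee_le_of_mem (dX r) (Real.pi / 2) (3 * Real.pi / 2) 0 1
          (3 * Real.pi / 2) ⟨hab, le_refl _⟩ (dX_nonneg r)
        have : dX r (3 * Real.pi / 2) 0 1 = 0 := by
          simp [dX, trajX, Matrix.cons_val_zero, Matrix.cons_val_one, Matrix.cons_val_two, Matrix.tail_cons, Matrix.head_cons, Matrix.vecHead, Matrix.vecTail, hsin32]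
        rw [this] at hle
        exact hle
      have h12 : R 1 2 := by
        have hle := vee_le_of_mem (dX r) (Real.pi / 2) (3 * Real.pi / 2) 1 2
          (Real.pi / 2) ⟨le_refl _, hab⟩ (dX_nonneg r)
        have : dX r (Real.pi / 2) 1 2 = 0 := by
          simp [dX, trajX, Matrix.cons_val_zero, Matrix.cons_val_one, Matrix.cons_val_two, Matrix.tail_cons, Matrix.head_cons, Matrix.vecHead, Matrix.vecTail, Real.sin_pi_div_two]
        rw [this] at hle
        exact hle
      have e01 : Quot.mk R 0 = Quot.mk R 1 := Quot.sound h01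
      have e12 : Quot.mk R 1 = Quot.mk R 2 := Quot.sound h12
      have hsub : ∀ i j : Fin 3, Quot.mk R i = Quot.mk R j := by
        intro i j
        fin_cases i <;> fin_cases j <;>
          first
            | rfl
            | exact e01
            | exact e12
            | exact e01.symm
            | exact e12.symm
            | exact e01.trans e12
            | exact (e01.trans e12).symm
      show Nat.card (Quot R) = 1
      rw [Nat.card_eq_one_iff_unique]
      refine ⟨⟨fun x y => ?_⟩, ⟨Quot.mk R 0⟩⟩
      induction x using Quot.ind
      induction y using Quot.ind
      exact hsub _ _
    · -- Y part: two classes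
      set a := Real.pi / 2 - ε with ha
      set b := 3 * Real.pi / 2 + ε with hb
      have hab' : a ≤ b := by rw [ha, hb]; linarith
      set R : Fin 3 → Fin 3 → Prop := fun x x' => vee (dY r) a b x x' ≤ ε with hR
      have hmem : Real.pi / 2 ∈ Set.Icc a b := ⟨by rw [ha]; linarith, by rw [hb]; linarith⟩
      have h12 : R 1 2 := by
        have hle := vee_le_of_mem (dY r) a b 1 2 (Real.pi / 2) hmem (dY_nonneg r)
        have : dY r (Real.pi / 2) 1 2 = 0 := by
          simp [dY, trajY, Matrix.cons_val_zero, Matrix.cons_val_one, Matrix.cons_val_two, Matrix.tail_cons, Matrix.head_cons, Matrix.vecHead, Matrix.vecTail, Real.sin_pi_div_two]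
        rw [this] at hle
        exact hle.trans hε
      -- lower bounds
      have hbd01 : ∀ s ∈ Set.Icc a b, r ≤ dY r s 0 1 := by
        intro s _
        have h2 : 0 ≤ r * |Real.sin s| := mul_nonneg hr.le (abs_nonneg _)
        have h1 : dY r s 0 1 = abs (-r - r * |Real.sin s|) := by
          simp [dY, trajY, Matrix.cons_val_zero, Matrix.cons_val_one, Matrix.cons_val_two, Matrix.tail_cons, Matrix.head_cons, Matrix.vecHead, Matrix.vecTail]
        rw [h1, abs_of_nonpos (by linarith)]
        linarith
      have hbd02 : ∀ s ∈ Set.Icc a b, r ≤ dY r s 0 2 := by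
        intro s _
        have h1 : dY r s 0 2 = abs (-r - r) := by
          simp [dY, trajY, Matrix.cons_val_zero, Matrix.cons_val_one, Matrix.cons_val_two, Matrix.tail_cons, Matrix.head_cons, Matrix.vecHead, Matrix.vecTail]
        rw [h1, abs_of_nonpos (by linarith)]
        linarith
      have h01 : ¬ R 0 1 := by
        have := le_vee (dY r) a b hab' 0 1 r hbd01
        simp only [hR]; linarith
      have h02 : ¬ R 0 2 := by
        have := le_vee (dY r) a b hab' 0 2 r hbd02
        simp only [hR]; linarith
      have h10 : ¬ R 1 0 := by
        have hbd : ∀ s ∈ Set.Icc a b, r ≤ dY r s 1 0 := by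
          intro s hs
          rw [show dY r s 1 0 = dY r s 0 1 from abs_sub_comm _ _]
          exact hbd01 s hs
        have := le_vee (dY r) a b hab' 1 0 r hbd
        simp only [hR]; linarith
      have h20 : ¬ R 2 0 := by
        have hbd : ∀ s ∈ Set.Icc a b, r ≤ dY r s 2 0 := by
          intro s hs
          rw [show dY r s 2 0 = dY r s 0 2 from abs_sub_comm _ _]
          exact hbd02 s hs
        have := le_vee (dY r) a b hab' 2 0 r hbd
        simp only [hR]; linarith
      -- build equivalence with Fin 2
      let g : Fin 3 → Fin 2 := ![0, 1, 1]
      have hwd : ∀ i j : Fin 3, R i j → g i = g j := by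
        intro i j hij
        fin_cases i <;> fin_cases j <;>
          first
            | rfl
            | exact absurd hij h01
            | exact absurd hij h02
            | exact absurd hij h10
            | exact absurd hij h20
      let f : Quot R → Fin 2 := Quot.lift g hwd
      let ginv : Fin 2 → Quot R := ![Quot.mk R 0, Quot.mk R 1]
      have e12' : Quot.mk R 1 = Quot.mk R 2 := Quot.sound h12
      have hleft : ∀ q : Quot R, ginv (f q) = q := by
        apply Quot.ind
        intro i
        fin_cases i
        · rfl
        · rfl
        · exact e12'
      have hright : ∀ k : Fin 2, f (ginv k) = k := by
        intro k; fin_cases k <;> rfl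
      have e : Quot R ≃ Fin 2 := ⟨f, ginv, hleft, hright⟩
      show Nat.card (Quot R) = 2
      rw [Nat.card_congr e]
      simp
  refine ⟨key, ?_⟩
  intro ε hε hint
  by_contra h
  push_neg at h
  obtain ⟨hA, hB⟩ := key ε hε h
  have h1 := (hint (Real.pi / 2) (3 * Real.pi / 2) 0 hab (le_refl 0)).1
  rw [hA, zero_add, hB] at h1
  omega

end Stmt16
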